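/- With G_n = K_n^{⊗ n²} and p_n = (1 − 1/n)^{n²}, the normalized 4-cycle density t_{p_n}(C_4, G_n) converges to 1 as n → ∞, while the normalized triangle density converges to e^{−1} ≠ 1. This refutes the statement: 'if all normalized densities converge and c_{C_4} = 1 then c_{K_3} = 1'. -/

import Mathlib

open Filter

/-- The `m`-th tensor power of the complete graph `K_n`. -/
def tensorPow (n m : ℕ) : SimpleGraph (Fin m → Fin n) where
  Adj x y := x ≠ y ∧ ∀ i, x i ≠ y i
  symm := ⟨fun x y h => ⟨h.1.symm, fun i => (h.2 i).symm⟩⟩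
  loopless := ⟨fun x h => h.1 rfl⟩

/-- The number of graph homomorphisms from `F` to `G`. -/
noncomputable def homCount {α β : Type*} (F : SimpleGraph α) (G : SimpleGraph β) : ℕ :=
  Nat.card (F →g G)

/-!
Homomorphisms into `K_n^{⊗m}` are `m`-tuples of homomorphisms into `K_n`, so each normalized
density is the `n²`-th power of a single-coordinate ratio. Since `(1 - 1/n) n = n - 1`, these ratios
are `hom(C₄, K_n) / (n-1)⁴ = 1 + 1/(n-1)³` and `hom(K₃, K_n) / (n-1)³ = 1 - 1/(n-1)²`, and
`(1 + a_n)^{k_n} → exp (lim k_n a_n)` gives the limits `e⁰ = 1` and `e⁻¹`.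
-/

open SimpleGraph Topology

/-- For `m ≠ 0` the condition `x ≠ y` in the adjacency of `tensorPow` follows from the
coordinatewise one. -/
def tensorPowHomEquiv {α : Type*} (F : SimpleGraph α) {n m : ℕ} (hm : m ≠ 0) :
    (F →g tensorPow n m) ≃ (Fin m → (F →g (⊤ : SimpleGraph (Fin n)))) where
  toFun φ i := ⟨fun v => φ v i, fun h => (φ.map_adj h).2 i⟩
  invFun f := ⟨fun v i => f i v, fun h =>
    ⟨fun he => (f ⟨0, Nat.pos_of_ne_zero hm⟩).map_adj h (congrFun he _), fun i => (f i).map_adj h⟩⟩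
  left_inv _ := rfl
  right_inv _ := rfl

theorem homCount_tensorPow {α : Type*} (F : SimpleGraph α) {n m : ℕ} (hm : m ≠ 0) :
    homCount F (tensorPow n m) = homCount F (⊤ : SimpleGraph (Fin n)) ^ m := by
  rw [homCount, Nat.card_congr (tensorPowHomEquiv F hm), Nat.card_fun, Nat.card_fin, homCount]

def topHomEquivEmbedding (α β : Type*) :
    ((⊤ : SimpleGraph α) →g (⊤ : SimpleGraph β)) ≃ (α ↪ β) where
  toFun f := ⟨f, Hom.injective_of_top_hom f⟩
  invFun f := ⟨f, fun h => (top_adj _ _).2 (f.injective.ne ((top_adj _ _).1 h))⟩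
  left_inv _ := rfl
  right_inv _ := rfl

theorem homCount_top_top (k n : ℕ) :
    homCount (⊤ : SimpleGraph (Fin k)) (⊤ : SimpleGraph (Fin n)) = n.descFactorial k := by
  rw [homCount, Nat.card_congr (topHomEquivEmbedding _ _), Nat.card_eq_fintype_card,
    Fintype.card_embedding_eq, Fintype.card_fin, Fintype.card_fin]

def cycleGraphFourHomEquiv {V : Type*} (G : SimpleGraph V) :
    (cycleGraph 4 →g G) ≃ Σ p : V × V, G.commonNeighbors p.1 p.2 × G.commonNeighbors p.1 p.2 where
  toFun f := ⟨(f 0, f 2),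
    ⟨f 1, f.map_adj (by decide), f.map_adj (by decide)⟩,
    ⟨f 3, f.map_adj (by decide), f.map_adj (by decide)⟩⟩
  invFun q := ⟨![q.1.1, q.2.1, q.1.2, q.2.2], by
    obtain ⟨⟨v, w⟩, ⟨x, hvx, hwx⟩, ⟨y, hvy, hwy⟩⟩ := q
    intro i j h
    fin_cases i <;> fin_cases j <;> first
      | exact absurd h (by decide)
      | simpa using hvx | simpa using hvx.symm | simpa using hwx | simpa using hwx.symm
      | simpa using hvy | simpa using hvy.symm | simpa using hwy | simpa using hwy.symm⟩
  left_inv f := by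
    ext i
    fin_cases i <;> rfl
  right_inv _ := rfl

theorem homCount_cycleGraph_four {V : Type*} [Fintype V] (G : SimpleGraph V) [DecidableRel G.Adj] :
    homCount (cycleGraph 4) G = ∑ p : V × V, Fintype.card (G.commonNeighbors p.1 p.2) ^ 2 := by
  rw [homCount, Nat.card_congr (cycleGraphFourHomEquiv G), Nat.card_eq_fintype_card,
    Fintype.card_sigma]
  simp only [Fintype.card_prod, sq]

theorem card_commonNeighbors_top_self {V : Type*} [Fintype V] [DecidableEq V] (v : V) :
    Fintype.card ((⊤ : SimpleGraph V).commonNeighbors v v) = Fintype.card V - 1 := by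
  simp [commonNeighbors_top_eq]

theorem homCount_cycleGraph_four_top (n : ℕ) :
    homCount (cycleGraph 4) (⊤ : SimpleGraph (Fin n)) =
      n * ((n - 1) ^ 2 + (n - 1) * (n - 2) ^ 2) := by
  have row (v : Fin n) :
      ∑ w, Fintype.card ((⊤ : SimpleGraph (Fin n)).commonNeighbors v w) ^ 2 =
        (n - 1) ^ 2 + (n - 1) * (n - 2) ^ 2 := by
    rw [← Finset.add_sum_erase _ _ (Finset.mem_univ v), card_commonNeighbors_top_self,
      Finset.sum_congr rfl fun w hw => by
        rw [card_commonNeighbors_top (Finset.ne_of_mem_erase hw).symm],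
      Finset.sum_const, Finset.card_erase_of_mem (Finset.mem_univ v)]
    simp
  rw [homCount_cycleGraph_four, Fintype.sum_prod_type, Finset.sum_congr rfl fun v _ => row v]
  simp

theorem homCount_cycleGraph_four_top_div {n : ℕ} (hn : 2 ≤ n) :
    (homCount (cycleGraph 4) (⊤ : SimpleGraph (Fin n)) : ℝ) / ((1 - 1 / (n : ℝ)) ^ 4 * n ^ 4) =
      1 + (((n : ℝ) - 1) ^ 3)⁻¹ := by
  have hn₂ : (2 : ℝ) ≤ n := by exact_mod_cast hn
  have hn₀ : (n : ℝ) ≠ 0 := by positivity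
  have hn₁ : (n : ℝ) - 1 ≠ 0 := by linarith
  rw [homCount_cycleGraph_four_top]
  push_cast [Nat.cast_sub (by omega : 1 ≤ n), Nat.cast_sub hn]
  field_simp
  ring

theorem homCount_top_three_top_div {n : ℕ} (hn : 2 ≤ n) :
    (homCount (⊤ : SimpleGraph (Fin 3)) (⊤ : SimpleGraph (Fin n)) : ℝ) /
        ((1 - 1 / (n : ℝ)) ^ 3 * n ^ 3) =
      1 - (((n : ℝ) - 1) ^ 2)⁻¹ := by
  have hn₂ : (2 : ℝ) ≤ n := by exact_mod_cast hn
  have hn₀ : (n : ℝ) ≠ 0 := by positivity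
  have hn₁ : (n : ℝ) - 1 ≠ 0 := by linarith
  rw [homCount_top_top]
  simp only [Nat.descFactorial_succ, Nat.descFactorial_zero, tsub_zero, mul_one]
  push_cast [Nat.cast_sub (by omega : 1 ≤ n), Nat.cast_sub hn]
  field_simp
  ring

theorem pow_div_pow_mul_pow {K : Type*} [Field K] (x a b : K) (m e v : ℕ) :
    x ^ m / ((a ^ m) ^ e * (b ^ m) ^ v) = (x / (a ^ e * b ^ v)) ^ m := by
  rw [div_pow, mul_pow, ← pow_mul, ← pow_mul, ← pow_mul, ← pow_mul, mul_comm m e, mul_comm m v]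

/-- Squeeze `k log (1 + a)` between `k a / (1 + a)` and `k a`. -/
theorem tendsto_one_add_pow_exp_of_tendsto_mul {ι : Type*} {l : Filter ι} {a : ι → ℝ}
    {k : ι → ℕ} {t : ℝ} (ha : Tendsto a l (𝓝 0)) (hka : Tendsto (fun i => k i * a i) l (𝓝 t)) :
    Tendsto (fun i => (1 + a i) ^ k i) l (𝓝 (Real.exp t)) := by
  have hpos : ∀ᶠ i in l, 0 < 1 + a i :=
    (ha.eventually (lt_mem_nhds (by norm_num : (-1 : ℝ) < 0))).mono fun i hi => by linarith
  have hlower : Tendsto (fun i => k i * a i / (1 + a i)) l (𝓝 t) := by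
    simpa [Pi.div_def] using hka.div (tendsto_const_nhds.add ha) (by norm_num : (1 : ℝ) + 0 ≠ 0)
  have hlog : Tendsto (fun i => k i * Real.log (1 + a i)) l (𝓝 t) := by
    refine tendsto_of_tendsto_of_tendsto_of_le_of_le' hlower hka ?_ ?_
    · filter_upwards [hpos] with i hi
      rw [mul_div_assoc]
      gcongr
      calc a i / (1 + a i) = 1 - (1 + a i)⁻¹ := by field_simp; ring
        _ ≤ Real.log (1 + a i) := Real.one_sub_inv_le_log_of_pos hi
    · filter_upwards [hpos] with i hi
      gcongr
      linarith [Real.log_le_sub_one_of_pos hi]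
  refine ((Real.continuous_exp.tendsto t).comp hlog).congr' ?_
  filter_upwards [hpos] with i hi
  rw [Function.comp_apply, ← Real.log_pow, Real.exp_log (pow_pos hi _)]

theorem tendsto_inv_natCast_sub_one : Tendsto (fun n : ℕ => ((n : ℝ) - 1)⁻¹) atTop (𝓝 0) :=
  (tendsto_atTop_add_const_right atTop (-1) tendsto_natCast_atTop_atTop).inv_tendsto_atTop

theorem tendsto_natCast_div_natCast_sub_one :
    Tendsto (fun n : ℕ => (n : ℝ) / (n - 1)) atTop (𝓝 1) := by
  simpa [sub_eq_add_neg] using tendsto_natCast_div_add_atTop (-1 : ℝ)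

theorem tendsto_one_add_inv_sub_one_pow_three_pow_sq :
    Tendsto (fun n : ℕ => (1 + (((n : ℝ) - 1) ^ 3)⁻¹) ^ (n ^ 2)) atTop (𝓝 1) := by
  have hka := (tendsto_natCast_div_natCast_sub_one.pow 2).mul tendsto_inv_natCast_sub_one
  rw [mul_zero] at hka
  simpa using tendsto_one_add_pow_exp_of_tendsto_mul (k := fun n => n ^ 2)
    (by simpa using tendsto_inv_natCast_sub_one.pow 3)
    (hka.congr fun n => by push_cast; rw [← inv_pow]; ring)

theorem tendsto_one_sub_inv_sub_one_sq_pow_sq :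
    Tendsto (fun n : ℕ => (1 - (((n : ℝ) - 1) ^ 2)⁻¹) ^ (n ^ 2)) atTop (𝓝 (Real.exp (-1))) := by
  have hka := (tendsto_natCast_div_natCast_sub_one.pow 2).neg
  rw [one_pow] at hka
  have h := tendsto_one_add_pow_exp_of_tendsto_mul (k := fun n => n ^ 2)
    (a := fun n : ℕ => -(((n : ℝ) - 1) ^ 2)⁻¹)
    (by simpa using (tendsto_inv_natCast_sub_one.pow 2).neg)
    (hka.congr fun n => by push_cast; rw [← inv_pow]; ring)
  simpa only [← sub_eq_add_neg] using h

/-- With `G_n = K_n^{⊗n²}` and `p_n = (1-1/n)^{n²}`, the normalized 4-cycle density tends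
to `1` while the normalized triangle density tends to `e^{-1} ≠ 1`, refuting
"`c_{C₄} = 1` implies `c_{K₃} = 1`". -/
theorem C4_density_one_but_triangle_density_not_one :
    Tendsto (fun n : ℕ => (homCount (SimpleGraph.cycleGraph 4) (tensorPow n (n ^ 2)) : ℝ)
        / (((1 - 1 / (n : ℝ)) ^ (n ^ 2)) ^ 4 * ((n : ℝ) ^ (n ^ 2)) ^ 4))
      atTop (nhds 1) ∧
    Tendsto (fun n : ℕ => (homCount (⊤ : SimpleGraph (Fin 3)) (tensorPow n (n ^ 2)) : ℝ)
        / (((1 - 1 / (n : ℝ)) ^ (n ^ 2)) ^ 3 * ((n : ℝ) ^ (n ^ 2)) ^ 3))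
      atTop (nhds (Real.exp (-1))) ∧
    Real.exp (-1) ≠ 1 := by
  refine ⟨tendsto_one_add_inv_sub_one_pow_three_pow_sq.congr' ?_,
    tendsto_one_sub_inv_sub_one_sq_pow_sq.congr' ?_, by simp⟩
  all_goals
    filter_upwards [eventually_ge_atTop 2] with n hn
    rw [homCount_tensorPow _ (by positivity), Nat.cast_pow, pow_div_pow_mul_pow]
  · rw [homCount_cycleGraph_four_top_div hn]
  · rw [homCount_top_three_top_div hn]
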